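/- Let X be a centered field with fractional Brownian field covariance of Hurst parameter H and scale σ on ℝ². Let e₀ = 1, e₁ = −2, e₂ = 1 and for k = (k₁, k₂) ∈ {0,1,2}² put d_k = e_{k₁} e_{k₂}. Then for every x ∈ ℝ² and every integer N ≥ 1, E((Σ_{k ∈ {0,1,2}²} d_k X(x + k/N))²) = c_H σ² N^{−2H}, where c_H = −(1/2) Σ_{k ∈ {0,1,2}²} Σ_{k' ∈ {0,1,2}²} d_k d_{k'} ‖k − k'‖^{2H}. In particular this expectation does not depend on x. -/

import Mathlib

open MeasureTheory

/-!
Expanding the square writes the expectation as `∑ k k', d_k d_k' E(X(s_k) X(s_k'))`. Since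
`∑ k, d_k = 0`, the terms `‖s_k‖^{2H} + ‖s_k'‖^{2H}` of the covariance cancel, leaving
`-(σ²/2) ∑ k k', d_k d_k' ‖s_k - s_k'‖^{2H}`; as `s_k - s_k' = N⁻¹ (k - k')`, homogeneity of the
norm produces the factor `N^{-2H}`, and the base point `x` has disappeared.
-/

/-- The second-difference coefficients `e₀ = 1`, `e₁ = -2`, `e₂ = 1`. -/
noncomputable def ee : Fin 3 → ℝ := ![1, -2, 1]

/-- The product coefficients `d_k = e_{k₁} e_{k₂}` for `k ∈ {0,1,2}²`. -/
noncomputable def dd (k : Fin 3 × Fin 3) : ℝ := ee k.1 * ee k.2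

/-- The lattice point `k = (k₁, k₂) ∈ {0,1,2}²` viewed as a point of `ℝ²`. -/
noncomputable def kvec (k : Fin 3 × Fin 3) : EuclideanSpace ℝ (Fin 2) :=
  WithLp.toLp 2 ![((k.1 : ℕ) : ℝ), ((k.2 : ℕ) : ℝ)]

section

variable {Ω ι : Type*} [MeasurableSpace Ω] {P : Measure Ω} [Fintype ι]

theorem integral_sq_sum_mul (c : ι → ℝ) (Y : ι → Ω → ℝ) (hY : ∀ i, MemLp (Y i) 2 P) :
    ∫ ω, (∑ i, c i * Y i ω) ^ 2 ∂P = ∑ i, ∑ j, c i * c j * ∫ ω, Y i ω * Y j ω ∂P := by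
  have hint : ∀ i j, Integrable (fun ω => c i * c j * (Y i ω * Y j ω)) P := fun i j =>
    ((hY i).integrable_mul (hY j)).const_mul _
  simp_rw [sq, Finset.sum_mul_sum, mul_mul_mul_comm (c _)]
  rw [integral_finsetSum _ fun i _ => integrable_finsetSum _ fun j _ => hint i j]
  simp_rw [← integral_const_mul]
  exact Finset.sum_congr rfl fun i _ => integral_finsetSum _ fun j _ => hint i j

omit [MeasurableSpace Ω] in
theorem sum_sum_mul_mul_add_eq_zero (c a : ι → ℝ) (hc : ∑ i, c i = 0) :
    ∑ i, ∑ j, c i * c j * (a i + a j) = 0 := by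
  calc ∑ i, ∑ j, c i * c j * (a i + a j)
      = (∑ i, c i * a i) * ∑ j, c j + (∑ i, c i) * ∑ j, c j * a j := by
        simp only [Finset.sum_mul_sum, ← Finset.sum_add_distrib]
        exact Finset.sum_congr rfl fun _ _ => Finset.sum_congr rfl fun _ _ => by ring
    _ = 0 := by rw [hc]; ring

theorem integral_sq_sum_of_fbf_cov {E : Type*} [NormedAddCommGroup E] (H σ : ℝ)
    (X : E → Ω → ℝ) (hL2 : ∀ t, MemLp (X t) 2 P)
    (hcov : ∀ s t, ∫ ω, X s ω * X t ω ∂P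
      = (σ ^ 2 / 2) * (‖s‖ ^ (2 * H) + ‖t‖ ^ (2 * H) - ‖s - t‖ ^ (2 * H)))
    (c : ι → ℝ) (hc : ∑ i, c i = 0) (t : ι → E) :
    ∫ ω, (∑ i, c i * X (t i) ω) ^ 2 ∂P
      = -(σ ^ 2 / 2) * ∑ i, ∑ j, c i * c j * ‖t i - t j‖ ^ (2 * H) := by
  rw [integral_sq_sum_mul c (fun i => X (t i)) fun i => hL2 (t i)]
  simp_rw [hcov, mul_sub, Finset.sum_sub_distrib, mul_left_comm _ (σ ^ 2 / 2),
    ← Finset.mul_sum, sum_sum_mul_mul_add_eq_zero c _ hc]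
  ring

end

theorem norm_add_smul_sub_add_smul_rpow {E : Type*} [NormedAddCommGroup E] [NormedSpace ℝ E]
    (x u v : E) {r : ℝ} (hr : 0 ≤ r) (p : ℝ) :
    ‖(x + r • u) - (x + r • v)‖ ^ p = r ^ p * ‖u - v‖ ^ p := by
  rw [add_sub_add_left_eq_sub, ← smul_sub, norm_smul, Real.norm_of_nonneg hr,
    Real.mul_rpow hr (norm_nonneg _)]

theorem sum_dd_eq_zero : ∑ k : Fin 3 × Fin 3, dd k = 0 := by
  simp [dd, Fintype.sum_prod_type, ← Finset.sum_mul, ← Finset.mul_sum, ee, Fin.sum_univ_three]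
  norm_num

theorem fbf_planar_second_order_increment_general
    {Ω : Type*} [MeasurableSpace Ω] (P : Measure Ω)
    (H σ : ℝ)
    (X : EuclideanSpace ℝ (Fin 2) → Ω → ℝ)
    (hL2 : ∀ t, MemLp (X t) 2 P)
    (hcov : ∀ s t, ∫ ω, X s ω * X t ω ∂P
      = (σ ^ 2 / 2) * (‖s‖ ^ (2 * H) + ‖t‖ ^ (2 * H) - ‖s - t‖ ^ (2 * H))) :
    ∀ (x : EuclideanSpace ℝ (Fin 2)) (N : ℕ), 1 ≤ N →
      ∫ ω, (∑ k : Fin 3 × Fin 3, dd k * X (x + ((N : ℝ))⁻¹ • kvec k) ω) ^ 2 ∂P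
        = (-(1 / 2 : ℝ) * ∑ k : Fin 3 × Fin 3, ∑ k' : Fin 3 × Fin 3,
              dd k * dd k' * ‖kvec k - kvec k'‖ ^ (2 * H))
            * σ ^ 2 * (N : ℝ) ^ (-(2 * H)) := by
  intro x N _
  have hN : (0 : ℝ) ≤ N := N.cast_nonneg
  have hscale : ((N : ℝ))⁻¹ ^ (2 * H) = (N : ℝ) ^ (-(2 * H)) := by
    rw [Real.inv_rpow hN, Real.rpow_neg hN]
  rw [integral_sq_sum_of_fbf_cov H σ X hL2 hcov dd sum_dd_eq_zero]
  simp_rw [norm_add_smul_sub_add_smul_rpow x _ _ (inv_nonneg.mpr hN), hscale,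
    mul_left_comm _ ((N : ℝ) ^ (-(2 * H))), ← Finset.mul_sum]
  ring

/-- For a centered field with fBf covariance of Hurst parameter `H` and
scale `σ` on `ℝ²`, the expected squared two-dimensional second-order increment satisfies
`E((Σ_k d_k X(x + k/N))²) = c_H σ² N^(-2H)` with
`c_H = -(1/2) Σ_k Σ_k' d_k d_k' ‖k - k'‖^(2H)`; in particular it does not depend on `x`. -/
theorem fbf_planar_second_order_increment
    {Ω : Type*} [MeasurableSpace Ω] (P : Measure Ω) [IsProbabilityMeasure P]
    (H σ : ℝ) (hH : H ∈ Set.Ioo (0 : ℝ) 1) (hσ : 0 < σ)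
    (X : EuclideanSpace ℝ (Fin 2) → Ω → ℝ)
    (hL2 : ∀ t, MemLp (X t) 2 P)
    (hmean : ∀ t, ∫ ω, X t ω ∂P = 0)
    (hcov : ∀ s t, ∫ ω, X s ω * X t ω ∂P
      = (σ ^ 2 / 2) * (‖s‖ ^ (2 * H) + ‖t‖ ^ (2 * H) - ‖s - t‖ ^ (2 * H))) :
    ∀ (x : EuclideanSpace ℝ (Fin 2)) (N : ℕ), 1 ≤ N →
      ∫ ω, (∑ k : Fin 3 × Fin 3, dd k * X (x + ((N : ℝ))⁻¹ • kvec k) ω) ^ 2 ∂P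
        = (-(1 / 2 : ℝ) * ∑ k : Fin 3 × Fin 3, ∑ k' : Fin 3 × Fin 3,
              dd k * dd k' * ‖kvec k - kvec k'‖ ^ (2 * H))
            * σ ^ 2 * (N : ℝ) ^ (-(2 * H)) :=
  fbf_planar_second_order_increment_general P H σ X hL2 hcov
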